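/- Let f be an n-variate boolean function that is neither monotone nor antimonotone. Then for all k ≥ 0 and b ∈ {0,1}: bs(f^(k)) ≤ bs_b(f^(k+1)) ≤ n · bs(f^(k)), and likewise bs*(f^(k)) ≤ bs*_b(f^(k+1)) ≤ n · bs*(f^(k)), where f^(0) denotes the univariate identity function. In particular, for k ≥ 1, min{bs_0(f^(k)), bs_1(f^(k))} ≥ bs(f^(k))/n, and similarly for fractional block sensitivity. -/

import Mathlib

open Filter

namespace BS

variable {I : Type*} [Fintype I] [DecidableEq I]

/-- Flip the bits of `x` indexed by `B`. -/
def flipSet (x : I → Bool) (B : Finset I) : I → Bool :=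
  fun i => if i ∈ B then !(x i) else x i

/-- `B` is a block of `f` at `x`. -/
def IsBlock (f : (I → Bool) → Bool) (x : I → Bool) (B : Finset I) : Prop :=
  f (flipSet x B) ≠ f x

/-- Block sensitivity of `f` at `x`: the maximum number of pairwise disjoint blocks. -/
noncomputable def bsAt (f : (I → Bool) → Bool) (x : I → Bool) : ℕ :=
  sSup {k | ∃ B : Fin k → Finset I, (∀ t, IsBlock f x (B t)) ∧
    ∀ t t', t ≠ t' → Disjoint (B t) (B t')}

/-- Block sensitivity of `f`. -/
noncomputable def bs (f : (I → Bool) → Bool) : ℕ :=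
  sSup {k | ∃ x, k = bsAt f x}

/-- `b`-block sensitivity of `f`. -/
noncomputable def bsb (f : (I → Bool) → Bool) (b : Bool) : ℕ :=
  sSup {k | ∃ x, f x = b ∧ k = bsAt f x}

/-- `M`-fold block sensitivity of `f` at `x`. -/
noncomputable def bsMAt (f : (I → Bool) → Bool) (M : ℕ) (x : I → Bool) : ℕ :=
  sSup {k | ∃ B : Fin k → Finset I, (∀ t, IsBlock f x (B t)) ∧
    ∀ i : I, (Finset.univ.filter (fun t => i ∈ B t)).card ≤ M}

/-- `M`-fold `b`-block sensitivity of `f`. -/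
noncomputable def bsMb (f : (I → Bool) → Bool) (M : ℕ) (b : Bool) : ℕ :=
  sSup {k | ∃ x, f x = b ∧ k = bsMAt f M x}

/-- Fractional block sensitivity of `f` at `x`. -/
noncomputable def fbsAt (f : (I → Bool) → Bool) (x : I → Bool) : ℝ :=
  sSup {s | ∃ lam : Finset I → ℝ, (∀ B, 0 ≤ lam B) ∧
    (∀ B, ¬ IsBlock f x B → lam B = 0) ∧
    (∀ i : I, ∑ B ∈ Finset.univ.filter (fun B : Finset I => i ∈ B), lam B ≤ 1) ∧
    s = ∑ B : Finset I, lam B}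

/-- Fractional block sensitivity of `f`. -/
noncomputable def fbs (f : (I → Bool) → Bool) : ℝ :=
  sSup {s | ∃ x, s = fbsAt f x}

/-- Fractional `b`-block sensitivity of `f`. -/
noncomputable def fbsb (f : (I → Bool) → Bool) (b : Bool) : ℝ :=
  sSup {s | ∃ x, f x = b ∧ s = fbsAt f x}

/-- Certificate complexity of `f` at `x`. -/
noncomputable def CAt (f : (I → Bool) → Bool) (x : I → Bool) : ℕ :=
  sInf {k | ∃ S : Finset I, (∀ B, IsBlock f x B → (S ∩ B).Nonempty) ∧ k = S.card}

/-- Certificate complexity of `f`. -/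
noncomputable def Cm (f : (I → Bool) → Bool) : ℕ :=
  sSup {k | ∃ x, k = CAt f x}

/-- `b`-certificate complexity of `f`. -/
noncomputable def Cb (f : (I → Bool) → Bool) (b : Bool) : ℕ :=
  sSup {k | ∃ x, f x = b ∧ k = CAt f x}

/-- Fractional certificate complexity of `f` at `x`. -/
noncomputable def fCAt (f : (I → Bool) → Bool) (x : I → Bool) : ℝ :=
  sInf {s | ∃ w : I → ℝ, (∀ i, 0 ≤ w i ∧ w i ≤ 1) ∧
    (∀ B, IsBlock f x B → 1 ≤ ∑ i ∈ B, w i) ∧ s = ∑ i, w i}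

/-- Fractional certificate complexity of `f`. -/
noncomputable def fC (f : (I → Bool) → Bool) : ℝ :=
  sSup {s | ∃ x, s = fCAt f x}

/-- Composition `f ∘ g` of boolean functions. -/
def comp {J : Type*} [Fintype J] [DecidableEq J]
    (f : (I → Bool) → Bool) (g : (J → Bool) → Bool) :
    ((I × J) → Bool) → Bool :=
  fun x => f (fun i => g (fun j => x (i, j)))

/-- `k`-fold iterated composition `f^(k)` of an `n`-variate boolean function; the
variables of `f^(k)` are indexed by strings in `Fin k → Fin n`.  `f^(0)` is the
univariate identity function. -/
def iter {n : ℕ} (f : (Fin n → Bool) → Bool) :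
    (k : ℕ) → ((Fin k → Fin n) → Bool) → Bool
  | 0, x => x (fun i => i.elim0)
  | k + 1, x => f (fun i => iter f k (fun s => x (Fin.cons i s)))

/-- Spectral radius of a real square matrix: the maximum of `|μ|` over the complex
eigenvalues `μ` of the matrix. -/
noncomputable def specRad {m : Type*} [Fintype m] [DecidableEq m]
    (A : Matrix m m ℝ) : ℝ :=
  sSup {r | ∃ μ : ℂ, μ ∈ spectrum ℂ (A.map Complex.ofReal) ∧ r = ‖μ‖}

end BS

/-!
Every block `B` of a composition `f ∘ g` at `x` restricts, on some copy `i` of `g`, to a block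
of `g` at the `i`-th input, and disjoint blocks restrict to disjoint blocks. So the blocks are
distributed over the `n` copies, each receiving at most `bs(g)` of them (fractionally: total
weight at most `bs*(g)`).

Conversely, since `f` is neither monotone nor antitone, for every value `b` and every bit `v`
there is an input `p` with `f p = b` that is sensitive at a coordinate `j` with `p j = v`. Feeding
`z` (with `g z = p j`) into copy `j`, and inputs evaluating to `p i` into the other copies, turns
every block of `g` at `z` into a block of `f ∘ g` at an input of value `b`.

The bound with the minimum follows because `bs(f^(k))` is the larger of `bs_0` and `bs_1`.
-/

namespace BS

open Finset Function

section Blocks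

variable {I : Type*} [DecidableEq I] {f : (I → Bool) → Bool} {x : I → Bool}

lemma flipSet_empty (x : I → Bool) : flipSet x ∅ = x := by
  funext i; simp [flipSet]

lemma flipSet_flipSet (x : I → Bool) (B : Finset I) : flipSet (flipSet x B) B = x := by
  funext i; by_cases h : i ∈ B <;> simp [flipSet, h]

lemma isBlock_flipSet_iff {B : Finset I} : IsBlock f (flipSet x B) B ↔ IsBlock f x B := by
  rw [IsBlock, IsBlock, flipSet_flipSet, ne_comm]

lemma IsBlock.nonempty {B : Finset I} (h : IsBlock f x B) : B.Nonempty := by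
  rw [nonempty_iff_ne_empty]
  rintro rfl
  exact h (by rw [flipSet_empty])

lemma bsAt_le {c : ℕ} (h : ∀ m (B : Fin m → Finset I),
      (∀ t, IsBlock f x (B t)) → Pairwise (Disjoint on B) → m ≤ c) :
    bsAt f x ≤ c :=
  csSup_le' fun m ⟨B, hB, hd⟩ => h m B hB fun t t' => hd t t'

lemma bs_le {c : ℕ} (h : ∀ x, bsAt f x ≤ c) : bs f ≤ c :=
  csSup_le' <| by rintro _ ⟨x, rfl⟩; exact h x

variable [Fintype I]

lemma card_le_of_pairwiseDisjoint_isBlock {ι : Type*} {s : Finset ι} {B : ι → Finset I}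
    (hB : ∀ t ∈ s, IsBlock f x (B t)) (hd : (s : Set ι).PairwiseDisjoint B) :
    #s ≤ Fintype.card I :=
  calc #s = ∑ _t ∈ s, 1 := card_eq_sum_ones s
    _ ≤ ∑ t ∈ s, #(B t) := sum_le_sum fun t ht => (hB t ht).nonempty.card_pos
    _ = #(s.biUnion B) := (card_biUnion hd).symm
    _ ≤ Fintype.card I := card_le_univ _

lemma bsAt_le_card : bsAt f x ≤ Fintype.card I :=
  bsAt_le fun _ _ hB hd => by
    simpa using card_le_of_pairwiseDisjoint_isBlock (s := univ) (fun t _ => hB t)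
      fun _ _ _ _ h => hd h

lemma card_le_bsAt {ι : Type*} {s : Finset ι} {B : ι → Finset I}
    (hB : ∀ t ∈ s, IsBlock f x (B t)) (hd : (s : Set ι).PairwiseDisjoint B) :
    #s ≤ bsAt f x := by
  refine le_csSup ⟨Fintype.card I, fun m ⟨C, hC, hd'⟩ => ?_⟩
    ⟨fun t => B (s.equivFin.symm t), fun t => hB _ (s.equivFin.symm t).2, fun t t' htt' => ?_⟩
  · simpa using card_le_of_pairwiseDisjoint_isBlock (s := univ) (fun t _ => hC t)
      fun t _ t' _ => hd' t t'
  · exact hd (s.equivFin.symm t).2 (s.equivFin.symm t').2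
      fun h => htt' (s.equivFin.symm.injective (Subtype.ext h))

lemma bsAt_le_bs (x : I → Bool) : bsAt f x ≤ bs f :=
  le_csSup ⟨Fintype.card I, by rintro _ ⟨y, rfl⟩; exact bsAt_le_card⟩ ⟨x, rfl⟩

lemma bsAt_le_bsb {b : Bool} (hx : f x = b) : bsAt f x ≤ bsb f b :=
  le_csSup ⟨Fintype.card I, by rintro _ ⟨y, -, rfl⟩; exact bsAt_le_card⟩ ⟨x, hx, rfl⟩

lemma bsb_le_bs (b : Bool) : bsb f b ≤ bs f :=
  csSup_le' <| by rintro _ ⟨x, -, rfl⟩; exact bsAt_le_bs x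

lemma bs_le_of_forall_bsb_le {c : ℕ} (h : ∀ b, bsb f b ≤ c) : bs f ≤ c :=
  bs_le fun _ => (bsAt_le_bsb rfl).trans (h _)

end Blocks

section Fractional

variable {I : Type*} [Fintype I] [DecidableEq I] {f : (I → Bool) → Bool} {x : I → Bool}

/-- A feasible point of the linear program whose value is `fbsAt f x`. -/
structure IsFracPacking (f : (I → Bool) → Bool) (x : I → Bool) (lam : Finset I → ℝ) :
    Prop where
  nonneg : ∀ B, 0 ≤ lam B
  eq_zero_of_not_isBlock : ∀ B, ¬ IsBlock f x B → lam B = 0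
  sum_le_one : ∀ i : I, ∑ B ∈ Finset.univ.filter (fun B : Finset I => i ∈ B), lam B ≤ 1

lemma IsFracPacking.sum_le_card {lam : Finset I → ℝ} (h : IsFracPacking f x lam) :
    ∑ B, lam B ≤ Fintype.card I :=
  calc ∑ B, lam B ≤ ∑ B, ∑ _i ∈ B, lam B := sum_le_sum fun B _ => by
        by_cases hB : IsBlock f x B
        · obtain ⟨i, hi⟩ := hB.nonempty
          exact single_le_sum (fun _ _ => h.nonneg B) hi
        · simp [h.eq_zero_of_not_isBlock B hB]
    _ = ∑ i, ∑ B ∈ univ.filter (fun B : Finset I => i ∈ B), lam B := sum_comm' (by simp)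
    _ ≤ ∑ _i : I, 1 := sum_le_sum fun i _ => h.sum_le_one i
    _ = Fintype.card I := by simp

lemma le_fbsAt {lam : Finset I → ℝ} (h : IsFracPacking f x lam) : ∑ B, lam B ≤ fbsAt f x :=
  le_csSup ⟨Fintype.card I, by
      rintro _ ⟨μ, h₁, h₂, h₃, rfl⟩
      exact IsFracPacking.sum_le_card ⟨h₁, h₂, h₃⟩⟩
    ⟨lam, h.1, h.2, h.3, rfl⟩

lemma fbsAt_le {c : ℝ} (h : ∀ lam, IsFracPacking f x lam → ∑ B, lam B ≤ c) :
    fbsAt f x ≤ c :=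
  csSup_le ⟨0, fun _ => 0, fun _ => le_rfl, fun _ _ => rfl, fun _ => by simp, by simp⟩ <| by
    rintro _ ⟨lam, h₁, h₂, h₃, rfl⟩; exact h lam ⟨h₁, h₂, h₃⟩

lemma fbsAt_nonneg : 0 ≤ fbsAt f x := by
  simpa using le_fbsAt (f := f) (x := x) (lam := 0)
    ⟨fun _ => le_rfl, fun _ _ => rfl, fun _ => by simp⟩

lemma fbsAt_le_card : fbsAt f x ≤ Fintype.card I :=
  fbsAt_le fun _ h => h.sum_le_card

lemma fbsAt_le_fbs (x : I → Bool) : fbsAt f x ≤ fbs f :=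
  le_csSup ⟨Fintype.card I, by rintro _ ⟨y, rfl⟩; exact fbsAt_le_card⟩ ⟨x, rfl⟩

lemma fbsAt_le_fbsb {b : Bool} (hx : f x = b) : fbsAt f x ≤ fbsb f b :=
  le_csSup ⟨Fintype.card I, by rintro _ ⟨y, -, rfl⟩; exact fbsAt_le_card⟩ ⟨x, hx, rfl⟩

lemma fbs_le {c : ℝ} (h : ∀ x, fbsAt f x ≤ c) : fbs f ≤ c :=
  csSup_le ⟨_, fun _ => false, rfl⟩ <| by rintro _ ⟨x, rfl⟩; exact h x

lemma fbsb_le_fbs (b : Bool) : fbsb f b ≤ fbs f :=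
  Real.sSup_le (by rintro _ ⟨x, -, rfl⟩; exact fbsAt_le_fbs x)
    (fbsAt_nonneg.trans (fbsAt_le_fbs fun _ => false))

lemma fbs_le_of_forall_fbsb_le {c : ℝ} (h : ∀ b, fbsb f b ≤ c) : fbs f ≤ c :=
  fbs_le fun _ => (fbsAt_le_fbsb rfl).trans (h _)

lemma sum_le_fbsAt_of_map {J : Type*} [DecidableEq J] {lam : Finset J → ℝ}
    (hnn : ∀ B, 0 ≤ lam B) (S : Finset (Finset J)) (ψ : Finset J → Finset I)
    (hblock : ∀ B ∈ S, lam B ≠ 0 → IsBlock f x (ψ B))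
    (hload : ∀ i, ∑ B ∈ S with i ∈ ψ B, lam B ≤ 1) :
    ∑ B ∈ S, lam B ≤ fbsAt f x := by
  rw [← sum_fiberwise S ψ lam]
  refine le_fbsAt ⟨fun C => sum_nonneg fun B _ => hnn B, fun C hC => ?_, fun i => ?_⟩
  · refine sum_eq_zero fun B hB => ?_
    obtain ⟨hBS, rfl⟩ := mem_filter.1 hB
    exact not_imp_comm.1 (hblock B hBS) hC
  · rw [sum_fiberwise_eq_sum_filter]
    simpa using hload i

end Fractional

section Embedding

variable {K J : Type*} [DecidableEq K] [Fintype J] [DecidableEq J]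
  {g : (K → Bool) → Bool} {h : (J → Bool) → Bool} {z : K → Bool} {y : J → Bool}
  {ι : K → J}

lemma bsAt_le_bsAt_of_image (hι : Injective ι)
    (hblock : ∀ C, IsBlock g z C → IsBlock h y (C.image ι)) : bsAt g z ≤ bsAt h y :=
  bsAt_le fun _ C hC hd => by
    simpa using card_le_bsAt (s := univ) (B := fun t => (C t).image ι)
      (fun t _ => hblock _ (hC t)) fun _ _ _ _ htt' => (disjoint_image hι).2 (hd htt')

variable [Fintype K]

lemma fbsAt_le_fbsAt_of_image (hι : Injective ι)
    (hblock : ∀ C, IsBlock g z C → IsBlock h y (C.image ι)) : fbsAt g z ≤ fbsAt h y := by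
  refine fbsAt_le fun lam hlam => ?_
  refine sum_le_fbsAt_of_map hlam.nonneg univ (·.image ι)
    (fun C _ hC => hblock C (not_imp_comm.1 (hlam.eq_zero_of_not_isBlock C) hC)) fun q => ?_
  by_cases hq : q ∈ Set.range ι
  · obtain ⟨s, rfl⟩ := hq
    simpa [hι.mem_finset_image] using hlam.sum_le_one s
  · simp only [Set.mem_range, not_exists] at hq
    simp [hq]

end Embedding

/-- `comp f g` and `iter f (k + 1)` are `compVia` along the wirings `Prod.mk` and `Fin.cons`. -/
def compVia {I K J : Type*} (f : (I → Bool) → Bool) (g : (K → Bool) → Bool)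
    (c : I → K → J) : (J → Bool) → Bool :=
  fun x => f fun i => g (x ∘ c i)

section Composition

variable {I K J : Type*} {f : (I → Bool) → Bool} {g : (K → Bool) → Bool} {c : I → K → J}

lemma exists_comp_eq (hc : Injective (uncurry c)) (Z : I → K → Bool) :
    ∃ x : J → Bool, ∀ i, x ∘ c i = Z i :=
  ⟨extend (uncurry c) (uncurry Z) fun _ => false,
    fun i => funext fun s => hc.extend_apply (uncurry Z) _ (i, s)⟩

lemma compVia_surjective (hf : Surjective f) (hg : Surjective g) (hc : Injective (uncurry c)) :
    Surjective (compVia f g c) := by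
  intro b
  obtain ⟨p, rfl⟩ := hf b
  choose Z hZ using fun i => hg (p i)
  obtain ⟨x, hx⟩ := exists_comp_eq hc Z
  exact ⟨x, by simp only [compVia, hx, hZ]⟩

variable [Fintype K] [DecidableEq K] [DecidableEq J]

lemma flipSet_comp (x : J → Bool) (B : Finset J) (φ : K → J) :
    flipSet x B ∘ φ = flipSet (x ∘ φ) (univ.filter (φ · ∈ B)) := by
  funext s; simp [flipSet]

lemma exists_isBlock_of_isBlock_compVia {x : J → Bool} {B : Finset J}
    (hB : IsBlock (compVia f g c) x B) :
    ∃ i, IsBlock g (x ∘ c i) (univ.filter (c i · ∈ B)) := by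
  by_contra! h
  refine hB (congrArg f (funext fun i => ?_))
  simpa [IsBlock, flipSet_comp] using h i

section Upper

variable [Fintype I]

lemma bsAt_compVia_le (x : J → Bool) : bsAt (compVia f g c) x ≤ ∑ i, bsAt g (x ∘ c i) := by
  classical
  refine bsAt_le fun m B hB hd => ?_
  choose φ hφ using fun t => exists_isBlock_of_isBlock_compVia (hB t)
  calc m = ∑ i, #(univ.filter (φ · = i)) := by
        simpa using card_eq_sum_card_fiberwise (s := univ) (t := univ) fun t _ => mem_univ (φ t)
    _ ≤ ∑ i, bsAt g (x ∘ c i) := sum_le_sum fun i _ => by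
        refine card_le_bsAt (B := fun t => univ.filter (c i · ∈ B t)) (fun t ht => ?_)
          fun t _ t' _ htt' => disjoint_filter.2 fun _ _ h h' => disjoint_left.1 (hd htt') h h'
        exact (mem_filter.1 ht).2 ▸ hφ t

lemma fbsAt_compVia_le [Fintype J] (x : J → Bool) :
    fbsAt (compVia f g c) x ≤ ∑ i, fbsAt g (x ∘ c i) := by
  classical
  refine fbsAt_le fun lam hlam => ?_
  -- each block is charged to every `i` at which its restriction is a block
  calc ∑ B, lam B
      ≤ ∑ B, ∑ i ∈ univ.filter
          (fun i => IsBlock g (x ∘ c i) (univ.filter (c i · ∈ B))), lam B :=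
        sum_le_sum fun B _ => by
          by_cases hB : IsBlock (compVia f g c) x B
          · obtain ⟨i, hi⟩ := exists_isBlock_of_isBlock_compVia hB
            exact single_le_sum (fun _ _ => hlam.nonneg B) (mem_filter.2 ⟨mem_univ i, hi⟩)
          · simp [hlam.eq_zero_of_not_isBlock B hB]
    _ = ∑ i, ∑ B ∈ univ.filter
          (fun B => IsBlock g (x ∘ c i) (univ.filter (c i · ∈ B))), lam B :=
        sum_comm' (by simp)
    _ ≤ ∑ i, fbsAt g (x ∘ c i) := sum_le_sum fun i _ => by
        refine sum_le_fbsAt_of_map hlam.nonneg _ _ (fun B hB _ => (mem_filter.1 hB).2)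
          fun s => ?_
        refine (sum_le_sum_of_subset_of_nonneg ?_ fun B _ _ => hlam.nonneg B).trans
          (hlam.sum_le_one (c i s))
        intro B hB
        simp only [mem_filter, mem_univ, true_and] at hB ⊢
        exact hB.2

lemma bs_compVia_le : bs (compVia f g c) ≤ Fintype.card I * bs g :=
  bs_le fun x => (bsAt_compVia_le x).trans <| by
    simpa using sum_le_sum fun i (_ : i ∈ univ) => bsAt_le_bs (f := g) (x ∘ c i)

lemma fbs_compVia_le [Fintype J] : fbs (compVia f g c) ≤ Fintype.card I * fbs g :=
  fbs_le fun x => (fbsAt_compVia_le x).trans <| by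
    simpa using sum_le_sum fun i (_ : i ∈ univ) => fbsAt_le_fbs (f := g) (x ∘ c i)

end Upper

section Lower

variable [DecidableEq I]

lemma filter_mem_image_of_injective_uncurry (hc : Injective (uncurry c)) (i j : I)
    (C : Finset K) : univ.filter (c i · ∈ C.image (c j)) = if i = j then C else ∅ := by
  have hcij : ∀ s s', c j s' = c i s ↔ j = i ∧ s' = s := fun s s' =>
    (hc.eq_iff (a := (j, s')) (b := (i, s))).trans Prod.ext_iff
  ext s
  split_ifs with h
  · subst h
    simp [hcij]
  · simp [hcij, Ne.symm h]

lemma exists_isBlock_image_compVia (hg : Surjective g) (hc : Injective (uncurry c))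
    {z : K → Bool} {p : I → Bool} {j : I} (hpj : p j = g z) (hp : IsBlock f p {j}) :
    ∃ x, compVia f g c x = f p ∧
      ∀ C, IsBlock g z C → IsBlock (compVia f g c) x (C.image (c j)) := by
  choose Z hZ using fun i => hg (p i)
  obtain ⟨x, hx⟩ := exists_comp_eq hc (update Z j z)
  have hval : ∀ i, g (x ∘ c i) = p i := fun i => by
    rcases eq_or_ne i j with rfl | hij
    · simp [hx, hpj]
    · simp [hx, hij, hZ]
  refine ⟨x, by simp only [compVia, hval], fun C hC => ?_⟩
  have hflip : ∀ i, g (flipSet x (C.image (c j)) ∘ c i) = flipSet p {j} i := fun i => by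
    rw [flipSet_comp, filter_mem_image_of_injective_uncurry hc]
    rcases eq_or_ne i j with rfl | hij
    · simpa [flipSet, hx, hpj] using Bool.eq_not_iff.2 hC
    · simp [hij, hval, flipSet_empty, flipSet]
  simpa [IsBlock, compVia, hflip, hval] using hp

variable [Fintype J]

lemma bs_le_bsb_compVia (hf : ∀ b v, ∃ p j, f p = b ∧ p j = v ∧ IsBlock f p {j})
    (hg : Surjective g) (hc : Injective (uncurry c)) (b : Bool) :
    bs g ≤ bsb (compVia f g c) b :=
  bs_le fun z => by
    obtain ⟨p, j, rfl, hpj, hp⟩ := hf b (g z)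
    obtain ⟨x, hx, hblock⟩ := exists_isBlock_image_compVia hg hc hpj hp
    exact (bsAt_le_bsAt_of_image (hc.comp (Prod.mk_right_injective j)) hblock).trans
      (bsAt_le_bsb hx)

lemma fbs_le_fbsb_compVia (hf : ∀ b v, ∃ p j, f p = b ∧ p j = v ∧ IsBlock f p {j})
    (hg : Surjective g) (hc : Injective (uncurry c)) (b : Bool) :
    fbs g ≤ fbsb (compVia f g c) b :=
  fbs_le fun z => by
    obtain ⟨p, j, rfl, hpj, hp⟩ := hf b (g z)
    obtain ⟨x, hx, hblock⟩ := exists_isBlock_image_compVia hg hc hpj hp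
    exact (fbsAt_le_fbsAt_of_image (hc.comp (Prod.mk_right_injective j)) hblock).trans
      (fbsAt_le_fbsb hx)

end Lower

end Composition

lemma surjective_of_not_monotone {α : Type*} [Preorder α] {f : α → Bool} (hm : ¬ Monotone f) :
    Surjective f := by
  intro b
  by_contra! h
  exact hm fun x y _ => by
    rw [Bool.eq_not_iff.2 (h x), Bool.eq_not_iff.2 (h y)]

section Sensitive

variable {I : Type*} [DecidableEq I] {f : (I → Bool) → Bool}

lemma exists_isBlock_singleton_of_covBy {a b : I → Bool} (hab : a ⋖ b) (hf : f a ≠ f b) :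
    ∃ i, b = flipSet a {i} ∧ a i = false ∧ IsBlock f a {i} := by
  obtain ⟨i, y, hy, rfl⟩ := Pi.covBy_iff_exists_right_eq.1 hab
  obtain ⟨hai, rfl⟩ : a i = false ∧ y = true := by revert hy; cases a i <;> cases y <;> decide
  have hflip : update a i true = flipSet a {i} := by
    funext j; by_cases hj : j = i <;> simp [flipSet, hj, hai]
  exact ⟨i, hflip, hai, by rw [IsBlock, ← hflip]; exact hf.symm⟩

variable [Fintype I]

/-- The witnesses are the two endpoints of an edge of the cube along which `f` decreases,
and of one along which it increases. -/
lemma exists_isBlock_singleton (hm : ¬ Monotone f) (ha : ¬ Antitone f) (b v : Bool) :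
    ∃ p j, f p = b ∧ p j = v ∧ IsBlock f p {j} := by
  classical
  let : LocallyFiniteOrder (I → Bool) := Fintype.toLocallyFiniteOrder
  simp only [monotone_iff_forall_covBy, antitone_iff_forall_covBy, not_forall] at hm ha
  obtain ⟨a, a', haa', hdec⟩ := hm
  obtain ⟨d, d', hdd', hinc⟩ := ha
  obtain ⟨hfa, hfa'⟩ : f a = true ∧ f a' = false := by
    revert hdec; cases f a <;> cases f a' <;> decide
  obtain ⟨hfd, hfd'⟩ : f d = false ∧ f d' = true := by
    revert hinc; cases f d <;> cases f d' <;> decide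
  obtain ⟨i, rfl, hai, hi⟩ :=
    exists_isBlock_singleton_of_covBy (f := f) haa' (by rw [hfa, hfa']; decide)
  obtain ⟨l, rfl, hdl, hl⟩ :=
    exists_isBlock_singleton_of_covBy (f := f) hdd' (by rw [hfd, hfd']; decide)
  cases b <;> cases v
  · exact ⟨d, l, hfd, hdl, hl⟩
  · exact ⟨flipSet a {i}, i, hfa', by simp [flipSet, hai], isBlock_flipSet_iff.2 hi⟩
  · exact ⟨a, i, hfa, hai, hi⟩
  · exact ⟨flipSet d {l}, l, hfd', by simp [flipSet, hdl], isBlock_flipSet_iff.2 hl⟩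

end Sensitive

section Iter

variable {n : ℕ} {f : (Fin n → Bool) → Bool}

lemma iter_succ (k : ℕ) :
    iter f (k + 1) = compVia f (iter f k) (Fin.cons (α := fun _ => Fin n)) := rfl

lemma injective_uncurry_cons (k : ℕ) :
    Injective (uncurry (Fin.cons (α := fun _ : Fin (k + 1) => Fin n))) :=
  Fin.cons_injective2.uncurry

lemma iter_surjective (hm : ¬ Monotone f) : ∀ k, Surjective (iter f k)
  | 0 => fun b => ⟨fun _ => b, rfl⟩
  | k + 1 => compVia_surjective (surjective_of_not_monotone hm) (iter_surjective hm k)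
      (injective_uncurry_cons k)

lemma bsb_iter_succ_le (k : ℕ) (b : Bool) : bsb (iter f (k + 1)) b ≤ n * bs (iter f k) := by
  have h := bs_compVia_le (f := f) (g := iter f k) (c := Fin.cons (α := fun _ => Fin n))
  rw [Fintype.card_fin, ← iter_succ] at h
  exact (bsb_le_bs b).trans h

lemma fbsb_iter_succ_le (k : ℕ) (b : Bool) : fbsb (iter f (k + 1)) b ≤ n * fbs (iter f k) := by
  have h := fbs_compVia_le (f := f) (g := iter f k) (c := Fin.cons (α := fun _ => Fin n))
  rw [Fintype.card_fin, ← iter_succ] at h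
  exact (fbsb_le_fbs b).trans h

lemma bs_iter_le_bsb_iter_succ (hm : ¬ Monotone f) (ha : ¬ Antitone f) (k : ℕ) (b : Bool) :
    bs (iter f k) ≤ bsb (iter f (k + 1)) b :=
  bs_le_bsb_compVia (exists_isBlock_singleton hm ha) (iter_surjective hm k)
    (injective_uncurry_cons k) b

lemma fbs_iter_le_fbsb_iter_succ (hm : ¬ Monotone f) (ha : ¬ Antitone f) (k : ℕ) (b : Bool) :
    fbs (iter f k) ≤ fbsb (iter f (k + 1)) b :=
  fbs_le_fbsb_compVia (exists_isBlock_singleton hm ha) (iter_surjective hm k)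
    (injective_uncurry_cons k) b

end Iter

end BS

open BS in
/-- Let `f` be an `n`-variate boolean function that is neither
monotone nor antimonotone.  Then for all `k ≥ 0` and `b ∈ {0,1}`:
`bs(f^(k)) ≤ bs_b(f^(k+1)) ≤ n·bs(f^(k))`, and likewise for the fractional block
sensitivity.  In particular, for `k ≥ 1`,
`bs(f^(k)) ≤ n · min{bs_0(f^(k)), bs_1(f^(k))}`, and similarly fractionally. -/
theorem bs_levels_comparison {n : ℕ} (f : (Fin n → Bool) → Bool)
    (hmono : ¬ Monotone f) (hanti : ¬ Antitone f) :
    (∀ k : ℕ, ∀ b : Bool,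
        bs (iter f k) ≤ bsb (iter f (k + 1)) b ∧
        bsb (iter f (k + 1)) b ≤ n * bs (iter f k) ∧
        fbs (iter f k) ≤ fbsb (iter f (k + 1)) b ∧
        fbsb (iter f (k + 1)) b ≤ n * fbs (iter f k)) ∧
      (∀ k : ℕ, 1 ≤ k →
        bs (iter f k) ≤ n * min (bsb (iter f k) false) (bsb (iter f k) true) ∧
        fbs (iter f k) ≤ n * min (fbsb (iter f k) false) (fbsb (iter f k) true)) := by
  have lower_bs := bs_iter_le_bsb_iter_succ hmono hanti
  have lower_fbs := fbs_iter_le_fbsb_iter_succ hmono hanti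
  refine ⟨fun k b => ⟨lower_bs k b, bsb_iter_succ_le k b, lower_fbs k b,
    fbsb_iter_succ_le k b⟩, fun k hk => ?_⟩
  obtain ⟨k, rfl⟩ := Nat.exists_eq_add_of_le' hk
  exact ⟨bs_le_of_forall_bsb_le fun b => (bsb_iter_succ_le k b).trans <|
      Nat.mul_le_mul_left n (le_min (lower_bs k false) (lower_bs k true)),
    fbs_le_of_forall_fbsb_le fun b => (fbsb_iter_succ_le k b).trans <|
      mul_le_mul_of_nonneg_left (le_min (lower_fbs k false) (lower_fbs k true)) n.cast_nonneg⟩
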